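/- Let k be a nonzero integer, and let z = x+iy, z' = x'+iy' ∈ ℍ (so y, y' > 0). Then ((conj(z)−z')/(conj(z')−z))^k · (cosh²(ρ(z,z')/2))^{-|k|} = (−1)^k·(4yy')^{|k|}·(x − x' + i·sign(k)·(y+y'))^{-2|k|}, where cosh²(ρ(z,z')/2) = ((x−x')² + (y+y')²)/(4yy') and sign(k) = k/|k|. -/

import Mathlib

/-- identity (dist-2) in the proof of Theorem 4.3. For a nonzero
integer `k` and `z = x+iy`, `z' = x'+iy'` in the upper half plane,
`((z̄−z')/(z̄'−z))^k (cosh²(ρ(z,z')/2))^{-|k|}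
  = (−1)^k (4yy')^{|k|} (x−x'+i·sign(k)(y+y'))^{-2|k|}`,
where `cosh²(ρ(z,z')/2) = ((x−x')²+(y+y')²)/(4yy')`. -/
theorem stmt17 (k : ℤ) (hk : k ≠ 0) (z z' : ℂ) (hz : 0 < z.im) (hz' : 0 < z'.im) :
    (((starRingEnd ℂ) z - z') / ((starRingEnd ℂ) z' - z)) ^ k
        * (((((z.re - z'.re) ^ 2 + (z.im + z'.im) ^ 2) / (4 * z.im * z'.im))
              ^ (-(|k| : ℤ)) : ℝ) : ℂ)
    = (-1) ^ k * (((4 * z.im * z'.im) ^ (|k| : ℤ) : ℝ) : ℂ)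
        * (((z.re - z'.re : ℝ) : ℂ)
            + Complex.I * ((Int.sign k : ℤ) : ℂ) * ((z.im + z'.im : ℝ) : ℂ))
          ^ (-(2 * |k|) : ℤ) := by
  set a : ℝ := z.re - z'.re with ha
  set b : ℝ := z.im + z'.im with hb
  have hbpos : (0:ℝ) < b := by simp [hb]; positivity
  have hcpos : (0:ℝ) < 4 * z.im * z'.im := by positivity
  set A : ℂ := (a:ℂ) - Complex.I * b with hA
  set B : ℂ := (a:ℂ) + Complex.I * b with hB
  have hAz : (starRingEnd ℂ) z - z' = A := by
    rw [hA, ha, hb]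
    apply Complex.ext <;> simp <;> ring
  have hBz : (starRingEnd ℂ) z' - z = -B := by
    rw [hB, ha, hb]
    apply Complex.ext <;> simp <;> ring
  have hD : (a:ℂ) ^ 2 + (b:ℂ) ^ 2 = A * B := by
    simp only [hA, hB]
    ring_nf
    rw [Complex.I_sq]
    ring
  have hAne : A ≠ 0 := by
    intro h
    have := congrArg Complex.im h
    simp [hA] at this
    linarith
  have hBne : B ≠ 0 := by
    intro h
    have := congrArg Complex.im h
    simp [hB] at this
    linarith
  have h4 : (4 * (z.im:ℂ) * (z'.im:ℂ)) ≠ 0 := by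
    exact_mod_cast ne_of_gt hcpos
  clear_value a b A B
  rw [hAz, hBz]
  rcases hk.lt_or_gt with hneg | hpos
  · obtain ⟨n, rfl⟩ : ∃ n : ℕ, k = -(n:ℤ) := ⟨k.natAbs, by omega⟩
    have hn : |(-(n:ℤ))| = (n:ℤ) := by
      rw [abs_neg, Int.abs_natCast]
    rw [hn]
    have hsign : ((Int.sign (-(n:ℤ)) : ℤ) : ℂ) = -1 := by
      simp [Int.sign_eq_neg_one_iff_neg.mpr (by omega : -(n:ℤ) < 0)]
    rw [hsign]
    have hW : (a:ℂ) + Complex.I * (-1) * b = A := by rw [hA]; ring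
    rw [hW]
    push_cast [Complex.ofReal_zpow]
    rw [hD]
    rw [show (-(2 * (n:ℤ))) = -((2*n : ℕ) : ℤ) by push_cast; ring]
    simp only [zpow_neg, zpow_natCast]
    field_simp [hAne, hBne, hz.ne', hz'.ne']
    have h2 : ((-1:ℂ)) ^ n * (-1) ^ n = 1 := by rw [← mul_pow]; norm_num
    rw [neg_pow (A / B), div_pow, div_pow]
    field_simp
    ring
  · obtain ⟨n, rfl⟩ : ∃ n : ℕ, k = (n:ℤ) := ⟨k.natAbs, by omega⟩
    have hn : |(n:ℤ)| = (n:ℤ) := Int.abs_natCast n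
    rw [hn]
    have hsign : ((Int.sign ((n:ℤ)) : ℤ) : ℂ) = 1 := by
      simp [Int.sign_eq_one_iff_pos.mpr hpos]
    rw [hsign]
    have hW : (a:ℂ) + Complex.I * 1 * b = B := by rw [hB]; ring
    rw [hW]
    push_cast [Complex.ofReal_zpow]
    rw [hD]
    rw [show (-(2 * (n:ℤ))) = -((2*n : ℕ) : ℤ) by push_cast; ring]
    simp only [zpow_neg, zpow_natCast]
    field_simp [hAne, hBne, hz.ne', hz'.ne']
    have h2 : ((-1:ℂ)) ^ n * (-1) ^ n = 1 := by rw [← mul_pow]; norm_num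
    rw [neg_pow (A / B), div_pow, div_pow]
    field_simp
    ring
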